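/- Let G = (V,E) be a finite simple undirected graph with positive edge weights and unique shortest paths, let s, v, t be vertices with d_G(v,t) ≤ d_G(v,s), and let f ∈ E be an edge such that s and v are connected in G − f and f does not lie on the unique shortest path π(v,t). Then d_{G−f}(s,t) + d_G(v,t) ≤ 3 · d_{G−f}(s,v). (Case 2 in the proof of Lemma 3.1.) -/

import Mathlib

/-!
Since the shortest path `π(v,t)` avoids `f`, it survives in `G − f`, so
`d_{G−f}(v,t) = d_G(v,t) ≤ d_G(v,s) ≤ d_{G−f}(s,v)`. The triangle inequality in `G − f`
through `v` then bounds `d_{G−f}(s,t)` by `d_{G−f}(s,v) + d_G(v,t)`, and each copy of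
`d_G(v,t)` costs at most one more `d_{G−f}(s,v)`.
-/

open scoped ENNReal

variable {V : Type*}

/-- The total weight of a walk: the sum of the weights of its edges (in `ℝ≥0∞`). -/
noncomputable def walkWeight {G : SimpleGraph V} (wt : Sym2 V → NNReal)
    {u v : V} (p : G.Walk u v) : ℝ≥0∞ :=
  (p.edges.map (fun e => (wt e : ℝ≥0∞))).sum

/-- The weighted shortest-path distance: the infimum over all walks from `u` to `v`
of their total weight (in `ℝ≥0∞`, so it is `∞` if `u` and `v` are not connected). -/
noncomputable def wdist (G : SimpleGraph V) (wt : Sym2 V → NNReal) (u v : V) : ℝ≥0∞ :=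
  ⨅ p : G.Walk u v, walkWeight wt p

/-- `G` has unique shortest paths: for every pair of connected vertices there is exactly
one walk of minimum total weight. -/
def HasUniqueShortestPaths (G : SimpleGraph V) (wt : Sym2 V → NNReal) : Prop :=
  ∀ u v : V, G.Reachable u v →
    ∃! p : G.Walk u v, walkWeight wt p = wdist G wt u v

lemma walkWeight_transfer {G H : SimpleGraph V} (wt : Sym2 V → NNReal) {u v : V}
    (p : G.Walk u v) (hp : ∀ e ∈ p.edges, e ∈ H.edgeSet) :
    walkWeight wt (p.transfer H hp) = walkWeight wt p := by
  simp [walkWeight, SimpleGraph.Walk.edges_transfer]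

lemma wdist_le_walkWeight {G : SimpleGraph V} (wt : Sym2 V → NNReal) {u v : V}
    (p : G.Walk u v) : wdist G wt u v ≤ walkWeight wt p :=
  iInf_le _ p

lemma wdist_comm (G : SimpleGraph V) (wt : Sym2 V → NNReal) (u v : V) :
    wdist G wt u v = wdist G wt v u := by
  have key : ∀ a b : V, wdist G wt a b ≤ wdist G wt b a := fun a b =>
    le_iInf fun p => (wdist_le_walkWeight wt p.reverse).trans_eq <| by
      simp [walkWeight, SimpleGraph.Walk.edges_reverse, List.map_reverse, List.sum_reverse]
  exact le_antisymm (key u v) (key v u)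

lemma wdist_triangle (G : SimpleGraph V) (wt : Sym2 V → NNReal) (u v w : V) :
    wdist G wt u w ≤ wdist G wt u v + wdist G wt v w := by
  simp only [wdist, ENNReal.iInf_add, ENNReal.add_iInf]
  exact le_iInf₂ fun q p => (wdist_le_walkWeight wt (p.append q)).trans_eq <| by
    simp [walkWeight, SimpleGraph.Walk.edges_append]

lemma wdist_anti {G H : SimpleGraph V} (h : H ≤ G) (wt : Sym2 V → NNReal) (u v : V) :
    wdist G wt u v ≤ wdist H wt u v :=
  le_iInf fun p =>
    (wdist_le_walkWeight wt (p.transfer G fun _ he =>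
      SimpleGraph.edgeSet_mono h (p.edges_subset_edgeSet he))).trans_eq
      (walkWeight_transfer wt p _)

lemma wdist_deleteEdges_eq_of_shortest_walk_disjoint {G : SimpleGraph V}
    (wt : Sym2 V → NNReal) {s : Set (Sym2 V)} {u v : V} (p : G.Walk u v)
    (hp : walkWeight wt p = wdist G wt u v) (hps : ∀ e ∈ p.edges, e ∉ s) :
    wdist (G.deleteEdges s) wt u v = wdist G wt u v := by
  have hpH : ∀ e ∈ p.edges, e ∈ (G.deleteEdges s).edgeSet := fun e he => by
    rw [SimpleGraph.edgeSet_deleteEdges]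
    exact ⟨p.edges_subset_edgeSet he, hps e he⟩
  refine le_antisymm ?_ (wdist_anti (G.deleteEdges_le s) wt u v)
  calc wdist (G.deleteEdges s) wt u v ≤ walkWeight wt (p.transfer _ hpH) :=
        wdist_le_walkWeight wt _
    _ = wdist G wt u v := by rw [walkWeight_transfer, hp]

theorem stmt7_general (G : SimpleGraph V) (wt : Sym2 V → NNReal)
    (s v t : V) (hvt : wdist G wt v t ≤ wdist G wt v s)
    (f : Sym2 V)
    (qvt : G.Walk v t) (hqvt : walkWeight wt qvt = wdist G wt v t)
    (hfq : f ∉ qvt.edges) :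
    wdist (G.deleteEdges {f}) wt s t + wdist G wt v t ≤
      3 * wdist (G.deleteEdges {f}) wt s v := by
  set H := G.deleteEdges {f}
  have hvt_H : wdist H wt v t = wdist G wt v t :=
    wdist_deleteEdges_eq_of_shortest_walk_disjoint wt qvt hqvt fun e he hef =>
      hfq (Set.mem_singleton_iff.mp hef ▸ he)
  have hvt_sv : wdist G wt v t ≤ wdist H wt s v :=
    calc wdist G wt v t ≤ wdist G wt v s := hvt
      _ ≤ wdist H wt v s := wdist_anti (G.deleteEdges_le {f}) wt v s
      _ = wdist H wt s v := wdist_comm H wt v s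
  calc wdist H wt s t + wdist G wt v t
      ≤ wdist H wt s v + wdist G wt v t + wdist G wt v t := by
        gcongr
        exact hvt_H ▸ wdist_triangle H wt s v t
    _ ≤ wdist H wt s v + wdist H wt s v + wdist H wt s v := by gcongr
    _ = 3 * wdist H wt s v := by ring

theorem stmt7 [Fintype V] [DecidableEq V] (G : SimpleGraph V) (wt : Sym2 V → NNReal)
    (hwt : ∀ e ∈ G.edgeSet, 0 < wt e)
    (huniq : HasUniqueShortestPaths G wt)
    (s v t : V) (hvt : wdist G wt v t ≤ wdist G wt v s)
    (f : Sym2 V) (hf : f ∈ G.edgeSet)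
    (hconn : (G.deleteEdges {f}).Reachable s v)
    (qvt : G.Walk v t) (hqvt : walkWeight wt qvt = wdist G wt v t)
    (hfq : f ∉ qvt.edges) :
    wdist (G.deleteEdges {f}) wt s t + wdist G wt v t ≤
      3 * wdist (G.deleteEdges {f}) wt s v :=
  stmt7_general G wt s v t hvt f qvt hqvt hfq
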